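/- arXiv:1510.09129 — 2 statements merged into one kernel-verified Lean document; each statement's English description precedes it below -/
import Mathlib

section
/- The set of 30 rules for a locomotive going down a vertical track (Table 2 of the paper, rules 17–46) is rotation-consistent. The rules are: (W,WBWBWBBBWW,W), (W,WBWRBBWWBB,R), (W,WWWWBRBWWW,W), (R,WBWWBBWWBB,W), (W,RWWWBWBWWW,W), (W,RBWWBBWWWW,W), (W,WBWWWWRWWW,W), (B,WBWWBWWWWW,B), (W,BWWWWWBWWW,W), (W,BWWWWBWWWW,W), (B,BWBWWWWRWW,B), (B,BRBWWWWWWW,B), (B,BWWWWWRWWW,B), (W,WBWBWBBWWW,W), (W,WWWWWBBWWW,W), (W,RBWWBBWWBB,W), (W,WBWWBBWWWW,W), (B,BWBWWWRWWW,B), (W,RBWBWBBWWW,R), (B,WBWWWWRWWW,B), (R,WBWRBBWWBB,R), (W,RWWWBRBWWW,W), (R,RBWWBBWWBB,W), (B,RWWWWWRWWW,B), (B,BRBWWWWRWW,B), (B,BRBWWWRWWW,B), (R,RBWBWBBWWW,R), (B,RBWWWWRWWW,B), (W,RWWWWBBWWW,W), (W,BWWWWWRWWW,W). -/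
/-- The three states of the cellular automaton: W (white, quiescent),
B (blue) and R (red). -/
inductive CAState : Type
  | W | B | R
  deriving DecidableEq, Repr

open CAState

/-- A neighbourhood: a word of length 10 over {W,B,R}; positions 0-4
(paper's 1-5) are the side-neighbours, positions 5-9 (paper's 6-10)
the vertex-neighbours. -/
abbrev Nbhd := Fin 10 → CAState

/-- Build a neighbourhood from its ten letters. -/
def nb (a b c d e f g h i j : CAState) : Nbhd := ![a, b, c, d, e, f, g, h, i, j]

/-- The rotation ρ: simultaneous cyclic shift of the side part and of the
vertex part: ρ(x1…x10) = x2x3x4x5x1x7x8x9x10x6. -/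
def rho (n : Nbhd) : Nbhd := fun i => n (![1, 2, 3, 4, 0, 6, 7, 8, 9, 5] i)

/-- Two neighbourhoods are rotation-equivalent if one is ρ^k of the other. -/
def RotEquiv (n m : Nbhd) : Prop := ∃ k : ℕ, n = rho^[k] m

/-- A rule: (current state, neighbourhood, new state). -/
abbrev Rule := CAState × Nbhd × CAState

/-- A set of rules is rotation-consistent if any two rules with the same
current state and rotation-equivalent neighbourhoods have the same new
state. -/
def RotationConsistent (L : List Rule) : Prop :=
  ∀ r₁ ∈ L, ∀ r₂ ∈ L, r₁.1 = r₂.1 → RotEquiv r₁.2.1 r₂.2.1 → r₁.2.2 = r₂.2.2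

/-!
No two of the thirty rules with the same current state have rotation-equivalent
neighbourhoods, so the consistency condition only ever compares a rule with itself.
Since `ρ` has order 5, rotation-equivalence is decided by comparing the five rotations,
and checking the 435 pairs of rules is a finite computation.
-/

theorem rho_isPeriodicPt (n : Nbhd) : Function.IsPeriodicPt rho 5 n := by
  show rho (rho (rho (rho (rho n)))) = n
  funext i
  fin_cases i <;> rfl

theorem rotEquiv_iff_exists_fin (n m : Nbhd) : RotEquiv n m ↔ ∃ k : Fin 5, n = rho^[k] m :=
  ⟨fun ⟨k, hk⟩ => ⟨⟨k % 5, Nat.mod_lt _ (by norm_num)⟩,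
      hk.trans ((rho_isPeriodicPt m).iterate_mod_apply k).symm⟩,
    fun ⟨k, hk⟩ => ⟨k, hk⟩⟩

instance : DecidableRel RotEquiv := fun n m => decidable_of_iff _ (rotEquiv_iff_exists_fin n m).symm

theorem RotEquiv.symm {n m : Nbhd} (h : RotEquiv n m) : RotEquiv m n := by
  obtain ⟨k, rfl⟩ := h
  refine ⟨4 * k, ?_⟩
  rw [← Function.iterate_add_apply, show 4 * k + k = k * 5 by ring]
  exact ((rho_isPeriodicPt m).const_mul k).eq.symm

def Clash (r₁ r₂ : Rule) : Prop := r₁.1 = r₂.1 ∧ RotEquiv r₁.2.1 r₂.2.1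

instance : DecidableRel Clash := fun _ _ => instDecidableAnd

theorem Clash.symm {r₁ r₂ : Rule} (h : Clash r₁ r₂) : Clash r₂ r₁ := ⟨h.1.symm, h.2.symm⟩

theorem rotationConsistent_of_pairwise_not_clash {L : List Rule}
    (hL : L.Pairwise fun r₁ r₂ => ¬ Clash r₁ r₂) : RotationConsistent L := by
  have : Std.Symm fun r₁ r₂ : Rule => ¬ Clash r₁ r₂ := ⟨fun _ _ h hc => h hc.symm⟩
  intro r₁ h₁ r₂ h₂ hs he
  by_cases hr : r₁ = r₂
  · rw [hr]
  · exact absurd ⟨hs, he⟩ (hL.forall h₁ h₂ hr)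

theorem down_track_rules_rotation_consistent :
    RotationConsistent [
    (W, nb W B W B W B B B W W, W),
    (W, nb W B W R B B W W B B, R),
    (W, nb W W W W B R B W W W, W),
    (R, nb W B W W B B W W B B, W),
    (W, nb R W W W B W B W W W, W),
    (W, nb R B W W B B W W W W, W),
    (W, nb W B W W W W R W W W, W),
    (B, nb W B W W B W W W W W, B),
    (W, nb B W W W W W B W W W, W),
    (W, nb B W W W W B W W W W, W),
    (B, nb B W B W W W W R W W, B),
    (B, nb B R B W W W W W W W, B),
    (B, nb B W W W W W R W W W, B),
    (W, nb W B W B W B B W W W, W),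
    (W, nb W W W W W B B W W W, W),
    (W, nb R B W W B B W W B B, W),
    (W, nb W B W W B B W W W W, W),
    (B, nb B W B W W W R W W W, B),
    (W, nb R B W B W B B W W W, R),
    (B, nb W B W W W W R W W W, B),
    (R, nb W B W R B B W W B B, R),
    (W, nb R W W W B R B W W W, W),
    (R, nb R B W W B B W W B B, W),
    (B, nb R W W W W W R W W W, B),
    (B, nb B R B W W W W R W W, B),
    (B, nb B R B W W W R W W W, B),
    (R, nb R B W B W B B W W W, R),
    (B, nb R B W W W W R W W W, B),
    (W, nb R W W W W B B W W W, W),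
    (W, nb B W W W W W R W W W, W)] :=
  rotationConsistent_of_pairwise_not_clash (by decide)
end

section
/- The set of 29 rules for a locomotive turning around three contiguous cells (Table 13 of the paper, rules 90–118) is rotation-consistent. The rules are: (W,WBWBWBBWBW,W), (W,RBWBWBBWBW,R), (R,WBWBWBBWBW,W), (B,BWWWWWWWWR,B), (W,WBRBWBBWBW,W), (W,WBWBWBBRBW,W), (B,BWWWWWWWRW,B), (B,BWRWWWWWWW,B), (W,BWBWRWBWWB,R), (B,BWWBWWWWRW,B), (B,BWRBWWWWWW,B), (B,BWWBWWWRWW,B), (B,BRWBWWWWWW,B), (B,BWWBWWRWWW,B), (R,RBWBWBBWBW,R), (R,WBRBWBBWBW,W), (B,BWWRWWWWWR,B), (W,WBRBWBBRBW,W), (B,BWRWWWWRWW,B), (W,BWBWRRBWWB,R), (B,BWRBWWWWRW,B), (B,BWWRWWWWRW,B), (B,BWRBWWWRWW,B), (B,BRWBWWWRWW,B), (R,BRWBWWBBWB,R), (R,BWWBRWBBWB,W), (W,BWWBRRBBWB,W), (W,WBRWBWBRBW,R), (R,WBRWBWBWBW,R). -/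
open CAState

/-! Since `rho` has order five, rotation-equivalence only needs to be tested against the five
rotations `rho^[k]`, `k < 5`, which makes rotation-consistency of a finite rule list decidable;
the theorem is then a finite computation. -/

theorem rho_iterate_five : rho^[5] = id := by
  funext n i
  fin_cases i <;> rfl

theorem rho_iterate_mod_five (k : ℕ) : rho^[k] = rho^[k % 5] := by
  conv_lhs => rw [← Nat.mod_add_div k 5, Function.iterate_add, Function.iterate_mul,
    rho_iterate_five, Function.iterate_id, Function.comp_id]

theorem rotEquiv_iff_exists_lt_five (n m : Nbhd) : RotEquiv n m ↔ ∃ k < 5, n = rho^[k] m :=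
  ⟨fun ⟨k, h⟩ => ⟨k % 5, Nat.mod_lt k (by norm_num), by rw [h, rho_iterate_mod_five]⟩,
    fun ⟨k, _, h⟩ => ⟨k, h⟩⟩

instance inst_s7 : DecidableRel RotEquiv := fun n m =>
  decidable_of_iff _ (rotEquiv_iff_exists_lt_five n m).symm

instance (L : List Rule) : Decidable (RotationConsistent L) :=
  inferInstanceAs (Decidable (∀ r₁ ∈ L, ∀ r₂ ∈ L, _))

theorem three_cell_rules_rotation_consistent :
    RotationConsistent [
    (W, nb W B W B W B B W B W, W),
    (W, nb R B W B W B B W B W, R),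
    (R, nb W B W B W B B W B W, W),
    (B, nb B W W W W W W W W R, B),
    (W, nb W B R B W B B W B W, W),
    (W, nb W B W B W B B R B W, W),
    (B, nb B W W W W W W W R W, B),
    (B, nb B W R W W W W W W W, B),
    (W, nb B W B W R W B W W B, R),
    (B, nb B W W B W W W W R W, B),
    (B, nb B W R B W W W W W W, B),
    (B, nb B W W B W W W R W W, B),
    (B, nb B R W B W W W W W W, B),
    (B, nb B W W B W W R W W W, B),
    (R, nb R B W B W B B W B W, R),
    (R, nb W B R B W B B W B W, W),
    (B, nb B W W R W W W W W R, B),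
    (W, nb W B R B W B B R B W, W),
    (B, nb B W R W W W W R W W, B),
    (W, nb B W B W R R B W W B, R),
    (B, nb B W R B W W W W R W, B),
    (B, nb B W W R W W W W R W, B),
    (B, nb B W R B W W W R W W, B),
    (B, nb B R W B W W W R W W, B),
    (R, nb B R W B W W B B W B, R),
    (R, nb B W W B R W B B W B, W),
    (W, nb B W W B R R B B W B, W),
    (W, nb W B R W B W B R B W, R),
    (R, nb W B R W B W B W B W, R)] := by
  decide
end
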